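/- Let c ≥ 1 be an integer and r : {1,…,N} → ℝ/ℤ a function taking values in the subgroup generated by 1/c. Then ∑_{1≤i,j≤N} B₂(r(i) − r(j)) ≥ N²/(12c²) − N/12, where B₂ is the periodic second Bernoulli polynomial. -/

import Mathlib

/-- The periodic second Bernoulli polynomial. -/
noncomputable def B2 (t : ℝ) : ℝ := (Int.fract t) ^ 2 - (Int.fract t) / 2 + 1 / 12

/-!
Let `B₂(t) = bernoulliFun 2 (fract t)` and `s(x) = x/c - (c-1)/(2c)` for `x ∈ {0, …, c-1} ≅ ℤ/c`.
Summing two quadratics over the ranges where `x + d` does or does not wrap around gives, for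
`a, b ∈ ℤ/c`, `B₂((a-b)/c) = (2/c) ∑ₓ s(a+x) s(b+x) + 1/(6c²)`, a discrete form of the fact that
`B₂/2` is the autocorrelation of the sawtooth. So `(B₂(rᵢ - rⱼ) - 1/(6c²))ᵢⱼ` is a Gram matrix,
the double sum of `B₂(rᵢ - rⱼ)` is at least `N²/(6c²)`, and `B2 ≥ B₂/2` pointwise.
-/

open Finset

lemma ZMod.sum_univ_eq_sum_range {M : Type*} [AddCommMonoid M] (c : ℕ) [NeZero c]
    (f : ZMod c → M) : ∑ x, f x = ∑ t ∈ range c, f t :=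
  sum_nbij' ZMod.val (↑) (fun x _ => mem_range.2 x.val_lt) (fun _ _ => mem_univ _)
    (fun x _ => ZMod.natCast_zmod_val x) (fun _ ht => ZMod.val_cast_of_lt (mem_range.1 ht))
    (fun x _ => by rw [ZMod.natCast_zmod_val])

lemma sum_range_add_mul_add (n : ℕ) (p q : ℝ) :
    ∑ t ∈ range n, ((t : ℝ) + p) * (t + q)
      = n * (n - 1) * (2 * n - 1) / 6 + (p + q) * (n * (n - 1) / 2) + n * p * q := by
  induction n with
  | zero => simp
  | succ n ih => rw [sum_range_succ, ih]; push_cast; ring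

lemma sum_sum_sum_mul_nonneg {ι κ : Type*} [Fintype ι] (s : Finset κ) (v : ι → κ → ℝ) :
    0 ≤ ∑ i, ∑ j, ∑ x ∈ s, v i x * v j x := by
  have hgram : ∑ i, ∑ j, ∑ x ∈ s, v i x * v j x = ∑ x ∈ s, (∑ i, v i x) ^ 2 := by
    simp only [sq, sum_mul_sum]
    rw [sum_comm (s := s)]
    exact sum_congr rfl fun _ _ => sum_comm
  rw [hgram]
  exact sum_nonneg fun x _ => sq_nonneg _

noncomputable def centeredSaw (c : ℕ) (x : ZMod c) : ℝ := x.val / c - (c - 1) / (2 * c)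

section
variable {c : ℕ}

lemma centeredSaw_natCast {t : ℕ} (ht : t < c) :
    centeredSaw c t = ((t : ℝ) - (c - 1) / 2) / c := by
  rw [centeredSaw, ZMod.val_cast_of_lt ht]
  field_simp

variable [NeZero c]

lemma sum_centeredSaw_add_natCast_mul {e : ℕ} (he : e < c) :
    ∑ x, centeredSaw c (x + e) * centeredSaw c x
      = ((c : ℝ) ^ 2 - 1) / (12 * c) - e * (c - e) / (2 * c) := by
  have hc : (c : ℝ) ≠ 0 := NeZero.ne _
  rw [ZMod.sum_univ_eq_sum_range, ← sum_range_add_sum_Ico _ (Nat.sub_le c e),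
    sum_Ico_eq_sum_range, Nat.sub_sub_self he.le]
  have hlow : ∀ t ∈ range (c - e), centeredSaw c (t + e) * centeredSaw c t
      = ((t + (e - (c - 1) / 2)) * (t + -((c - 1) / 2))) / c ^ 2 := by
    intro t ht
    have ht := mem_range.1 ht
    rw [← Nat.cast_add, centeredSaw_natCast (by omega), centeredSaw_natCast (by omega)]
    push_cast
    field_simp
    ring
  have hhigh : ∀ u ∈ range e, centeredSaw c ((c - e + u : ℕ) + e) * centeredSaw c (c - e + u : ℕ)
      = ((u + -((c - 1) / 2)) * (u + ((c - e : ℕ) - (c - 1) / 2))) / c ^ 2 := by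
    intro u hu
    have hu := mem_range.1 hu
    have hwrap : ((c - e + u : ℕ) : ZMod c) + e = u := by
      rw [← Nat.cast_add, show c - e + u + e = u + c by omega, Nat.cast_add, ZMod.natCast_self,
        add_zero]
    rw [hwrap, centeredSaw_natCast (by omega), centeredSaw_natCast (by omega)]
    push_cast
    field_simp
    ring
  rw [sum_congr rfl hlow, sum_congr rfl hhigh, ← sum_div, ← sum_div, sum_range_add_mul_add,
    sum_range_add_mul_add, Nat.cast_sub he.le]
  field_simp
  ring

lemma sum_centeredSaw_add_mul_add (a b : ZMod c) :
    ∑ x, centeredSaw c (a + x) * centeredSaw c (b + x)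
      = ((c : ℝ) ^ 2 - 1) / (12 * c) - (a - b).val * (c - (a - b).val) / (2 * c) :=
  calc ∑ x, centeredSaw c (a + x) * centeredSaw c (b + x)
      = ∑ y, centeredSaw c (y + ((a - b).val : ℕ)) * centeredSaw c y :=
        Fintype.sum_equiv (Equiv.addLeft b) _ _ fun x => by
          simp only [Equiv.coe_addLeft, ZMod.natCast_zmod_val]
          ring_nf
    _ = _ := sum_centeredSaw_add_natCast_mul (ZMod.val_lt _)

lemma bernoulliFun_two_val_sub_div (a b : ZMod c) :
    bernoulliFun 2 ((a - b).val / c)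
      = 2 / c * ∑ x, centeredSaw c (a + x) * centeredSaw c (b + x) + 1 / (6 * c ^ 2) := by
  have hc : (c : ℝ) ≠ 0 := NeZero.ne _
  rw [bernoulliFun_two, sum_centeredSaw_add_mul_add]
  field_simp
  ring

lemma fract_intCast_div_natCast (n : ℤ) : Int.fract ((n : ℝ) / c) = (n : ZMod c).val / c := by
  rw [Int.fract_div_intCast_eq_div_intCast_mod, ← ZMod.val_intCast, Int.cast_natCast]

theorem le_sum_sum_bernoulliFun_two_fract {ι : Type*} [Fintype ι] (k : ι → ℤ) :
    (Fintype.card ι : ℝ) ^ 2 / (6 * c ^ 2)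
      ≤ ∑ i, ∑ j, bernoulliFun 2 (Int.fract ((k i : ℝ) / c - k j / c)) := by
  have hpair : ∀ i j, bernoulliFun 2 (Int.fract ((k i : ℝ) / c - k j / c))
      = 2 / c * ∑ x, centeredSaw c (k i + x) * centeredSaw c (k j + x) + 1 / (6 * c ^ 2) := by
    intro i j
    rw [← sub_div, ← Int.cast_sub, fract_intCast_div_natCast, Int.cast_sub,
      bernoulliFun_two_val_sub_div]
  simp only [hpair, sum_add_distrib, ← mul_sum, sum_const, card_univ, nsmul_eq_mul]
  have hgram := sum_sum_sum_mul_nonneg univ fun i (x : ZMod c) => centeredSaw c (k i + x)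
  calc (Fintype.card ι : ℝ) ^ 2 / (6 * c ^ 2)
      = Fintype.card ι * (Fintype.card ι * (1 / (6 * c ^ 2))) := by ring
    _ ≤ _ := le_add_of_nonneg_left (mul_nonneg (by positivity) hgram)

end

lemma bernoulliFun_two_fract_div_two_le_B2 (x : ℝ) : bernoulliFun 2 (Int.fract x) / 2 ≤ B2 x := by
  rw [bernoulliFun_two, B2]
  linarith [sq_nonneg (Int.fract x)]

theorem stmt4 (c N : ℕ) (hc : 1 ≤ c) (r : Fin N → ℝ)
    (hr : ∀ i, ∃ k : ℤ, r i = (k : ℝ) / c) :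
    (N : ℝ) ^ 2 / (12 * (c : ℝ) ^ 2) - (N : ℝ) / 12 ≤ ∑ i, ∑ j, B2 (r i - r j) := by
  have : NeZero c := ⟨by omega⟩
  choose k hk using hr
  have hbern := le_sum_sum_bernoulliFun_two_fract (c := c) k
  rw [Fintype.card_fin] at hbern
  simp only [hk]
  calc (N : ℝ) ^ 2 / (12 * (c : ℝ) ^ 2) - (N : ℝ) / 12 ≤ (N : ℝ) ^ 2 / (12 * c ^ 2) :=
        sub_le_self _ (by positivity)
    _ = (N : ℝ) ^ 2 / (6 * c ^ 2) / 2 := by ring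
    _ ≤ ∑ i, ∑ j, bernoulliFun 2 (Int.fract ((k i : ℝ) / c - k j / c)) / 2 := by
        simpa only [sum_div] using div_le_div_of_nonneg_right hbern zero_le_two
    _ ≤ ∑ i, ∑ j, B2 ((k i : ℝ) / c - k j / c) :=
        sum_le_sum fun i _ => sum_le_sum fun j _ => bernoulliFun_two_fract_div_two_le_B2 _
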